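/- Let M be a matroid on ground set S with injective cost function μ. Sample a random subset F ⊆ S by including each element independently with probability p. Call an element e ∈ S F-good if F^{>μ(e)} does not block e, and F-bad otherwise. Then the number of F-good elements in S is stochastically dominated by a negative binomial random variable NegBin(rank(M); p). -/

import Mathlib

/-!
Scan the elements in decreasing order of cost, keeping the set `C` of sampled elements seen so
far. An element `a` is good exactly when it lies outside the closure of `C`, and whether `a` is
sampled is a `p`-coin independent of everything decided before it. A good element that is sampled
raises the rank of `C` by one, so once `rank M` good elements have been sampled none remain.
Hence the good elements are the flips of a coin tossed until the `rank M`-th head (or fewer),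
which is the claimed domination by `NegBin(rank M; p)`. Formally one inducts on the set of
elements still to be scanned, with `Pr[Bin(r; p) < k]` satisfying Pascal's recursion.
-/

open Matroid Set

variable {α : Type*}

/-- The `ℕ∞`-valued rank of a set `X` in a matroid `M`:
the supremum of the sizes of independent subsets of `X`. -/
noncomputable def Matroid.eRank' (M : Matroid α) (X : Set α) : ℕ∞ :=
  ⨆ I ∈ {I | M.Indep I ∧ I ⊆ X}, I.encard

/-- A set `A` *blocks* an element `e` if adding `e` to `A` does not increase the rank. -/
def Matroid.Blocks (M : Matroid α) (A : Set α) (e : α) : Prop :=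
  M.eRank' (insert e A) = M.eRank' A

/-- The total weight of a set of elements. -/
noncomputable def wt (μ : α → ℝ) (I : Set α) : ℝ := ∑ᶠ e ∈ I, μ e

/-- `I` is a maximum-weight base of `M` with respect to the weight function `μ`. -/
def IsMaxWeightBase (M : Matroid α) (μ : α → ℝ) (I : Set α) : Prop :=
  M.IsBase I ∧ ∀ J, M.IsBase J → wt μ J ≤ wt μ I

/-- The modified cost function `μ_{I,ε}` adding `ε` to the weight of each element of `I`. -/
noncomputable def modCost (μ : α → ℝ) (I : Set α) (ε : ℝ) : α → ℝ :=
  fun e => μ e + I.indicator (fun _ => ε) e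

/-- `I` is an `ε`-optimal base of `M` w.r.t. `μ`:
it is a maximum-weight base for the modified cost `μ_{I,ε}`. -/
def EpsOptimal (M : Matroid α) (μ : α → ℝ) (ε : ℝ) (I : Set α) : Prop :=
  IsMaxWeightBase M (modCost μ I ε) I

/-- Contraction of a matroid, defined by duality: `M ／ C = (M✶ ↾ (M.E \ C))✶`. -/
noncomputable def Matroid.contract' (M : Matroid α) (C : Set α) : Matroid α :=
  (M✶ ↾ (M.E \ C))✶

/-- The weight of a maximum-weight base of `M` with respect to `μ`. -/
noncomputable def OPTval (M : Matroid α) (μ : α → ℝ) : ℝ :=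
  sSup ((fun B => wt μ B) '' {B | M.IsBase B})

open MeasureTheory ProbabilityTheory

lemma ProbabilityTheory.iIndepFun.measure_inter_eq_mul_of_dependsOn {ι Ω β : Type*}
    [MeasurableSpace Ω] [MeasurableSpace β] [MeasurableSingletonClass β] [Countable β]
    {P : Measure Ω} {X : ι → Ω → β} (hindep : iIndepFun X P) (hmeas : ∀ i, Measurable (X i))
    {T : Finset ι} {i : ι} (hi : i ∉ T) (b : β) {Q : (ι → β) → Prop} (hQ : DependsOn Q T) :
    P ({ω | X i ω = b} ∩ {ω | Q (X · ω)}) = P {ω | X i ω = b} * P {ω | Q (X · ω)} := by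
  have hind := hindep.indepFun_finset {i} T (Finset.disjoint_singleton_left.mpr hi) hmeas
  set g : Ω → (T → β) := fun ω j => X j ω
  have hQg : {ω | Q (X · ω)} = g ⁻¹' (g '' {ω | Q (X · ω)}) := by
    refine (subset_preimage_image _ _).antisymm ?_
    rintro ω ⟨ω', hω', hg⟩
    exact (@hQ (X · ω') (X · ω) fun j hj => congrFun hg ⟨j, hj⟩).mp hω'
  have hXi : {ω | X i ω = b} =
      (fun ω (j : ({i} : Finset ι)) => X j ω) ⁻¹' {v | v ⟨i, Finset.mem_singleton_self i⟩ = b} :=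
    rfl
  rw [hQg, hXi]
  exact hind.meas_inter ⟨_, (to_countable _).measurableSet, rfl⟩
    ⟨_, (to_countable _).measurableSet, rfl⟩

lemma measure_eq_false_eq_ofReal_one_sub {Ω : Type*} [MeasurableSpace Ω] {P : Measure Ω}
    [IsProbabilityMeasure P] {f : Ω → Bool} (hf : Measurable f) {p : ℝ} (hp0 : 0 ≤ p)
    (hpf : P {ω | f ω = true} = ENNReal.ofReal p) :
    P {ω | f ω = false} = ENNReal.ofReal (1 - p) := by
  have hcompl : {ω | f ω = false} = {ω | f ω = true}ᶜ := by ext; simp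
  have htrue : MeasurableSet {ω | f ω = true} := hf (measurableSet_singleton true)
  rw [hcompl, prob_compl_eq_one_sub htrue, hpf,
    ENNReal.ofReal_sub _ hp0, ENNReal.ofReal_one]

lemma measure_le_of_subset_bernoulli_split {Ω : Type*} [MeasurableSpace Ω] {P : Measure Ω}
    [IsProbabilityMeasure P] {X : α → Ω → Bool} (hindep : iIndepFun X P)
    (hmeas : ∀ e, Measurable (X e)) {p : ℝ} (hp0 : 0 ≤ p) (hp1 : p ≤ 1)
    (hpe : ∀ e, P {ω | X e ω = true} = ENNReal.ofReal p) {T : Finset α} {i : α} (hi : i ∉ T)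
    {Q₁ Q₂ : (α → Bool) → Prop} (hQ₁ : DependsOn Q₁ T) (hQ₂ : DependsOn Q₂ T) {b₁ b₂ : ℝ}
    (hb₁ : 0 ≤ b₁) (hb₂ : 0 ≤ b₂) (h₁ : P {ω | Q₁ (X · ω)} ≤ ENNReal.ofReal b₁)
    (h₂ : P {ω | Q₂ (X · ω)} ≤ ENNReal.ofReal b₂) {E : Set Ω}
    (hE : E ⊆ {ω | X i ω = true ∧ Q₁ (X · ω)} ∪ {ω | X i ω = false ∧ Q₂ (X · ω)}) :
    P E ≤ ENNReal.ofReal (p * b₁ + (1 - p) * b₂) := by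
  calc P E ≤ P ({ω | X i ω = true} ∩ {ω | Q₁ (X · ω)}) +
        P ({ω | X i ω = false} ∩ {ω | Q₂ (X · ω)}) := (measure_mono hE).trans (measure_union_le _ _)
    _ = ENNReal.ofReal p * P {ω | Q₁ (X · ω)} + ENNReal.ofReal (1 - p) * P {ω | Q₂ (X · ω)} := by
      rw [hindep.measure_inter_eq_mul_of_dependsOn hmeas hi _ hQ₁,
        hindep.measure_inter_eq_mul_of_dependsOn hmeas hi _ hQ₂, hpe,
        measure_eq_false_eq_ofReal_one_sub (hmeas i) hp0 (hpe i)]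
    _ ≤ ENNReal.ofReal p * ENNReal.ofReal b₁ + ENNReal.ofReal (1 - p) * ENNReal.ofReal b₂ := by
      gcongr
    _ = ENNReal.ofReal (p * b₁ + (1 - p) * b₂) := by
      have : 0 ≤ 1 - p := by linarith
      rw [ENNReal.ofReal_add (by positivity) (by positivity), ENNReal.ofReal_mul hp0,
        ENNReal.ofReal_mul this]

/-- `Pr[Bin(r; p) < k]`, which equals `Pr[NegBin(k; p) > r]`. -/
def negBinomialTail (p : ℝ) (k r : ℕ) : ℝ :=
  ∑ j ∈ Finset.range k, (r.choose j : ℝ) * p ^ j * (1 - p) ^ (r - j)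

lemma negBinomialTail_nonneg {p : ℝ} (hp0 : 0 ≤ p) (hp1 : p ≤ 1) (k r : ℕ) :
    0 ≤ negBinomialTail p k r := by
  have : 0 ≤ 1 - p := by linarith
  unfold negBinomialTail
  positivity

lemma negBinomialTail_succ_zero (p : ℝ) (k : ℕ) : negBinomialTail p (k + 1) 0 = 1 := by
  simp [negBinomialTail, Finset.sum_range_succ', Nat.choose_eq_zero_of_lt]

lemma negBinomialTail_succ_succ (p : ℝ) (k r : ℕ) :
    negBinomialTail p (k + 1) (r + 1) =
      p * negBinomialTail p k r + (1 - p) * negBinomialTail p (k + 1) r := by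
  have pascal (i : ℕ) : ((r + 1).choose (i + 1) : ℝ) * p ^ (i + 1) * (1 - p) ^ (r - i) =
      p * ((r.choose i : ℝ) * p ^ i * (1 - p) ^ (r - i)) +
        (1 - p) * ((r.choose (i + 1) : ℝ) * p ^ (i + 1) * (1 - p) ^ (r - (i + 1))) := by
    rw [Nat.choose_succ_succ, Nat.cast_add]
    rcases le_or_gt (i + 1) r with h | h
    · rw [show r - i = r - (i + 1) + 1 by omega]
      ring
    · rw [Nat.choose_eq_zero_of_lt h, Nat.cast_zero]
      ring
  simp only [negBinomialTail, Finset.sum_range_succ' _ k, Nat.add_sub_add_right, pascal,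
    Finset.sum_add_distrib, ← Finset.mul_sum, Nat.choose_zero_right, Nat.cast_one, pow_zero,
    mul_one, one_mul, tsub_zero]
  ring

namespace Matroid

variable {M : Matroid α} {μ : α → ℝ} {A C F F' T : Set α} {a e : α} {k : ℕ}

lemma eRank'_eq_eRk (M : Matroid α) (X : Set α) : M.eRank' X = M.eRk X := by
  refine le_antisymm (iSup₂_le fun I hI => hI.1.encard_le_eRk_of_subset hI.2) ?_
  obtain ⟨I, hI⟩ := M.exists_isBasis' X
  exact hI.eRk_eq_encard ▸ le_iSup₂_of_le I ⟨hI.indep, hI.subset⟩ le_rfl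

lemma eRk_insert_of_mem_closure (he : e ∈ M.closure A) : M.eRk (insert e A) = M.eRk A := by
  rw [← eRk_insert_closure_eq, insert_eq_of_mem he, eRk_closure_eq]

lemma blocks_iff_mem_closure [M.RankFinite] (he : e ∈ M.E) : M.Blocks A e ↔ e ∈ M.closure A := by
  refine ⟨fun h => by_contra fun hcl => ?_, fun h => ?_⟩
  · rw [Blocks, eRank'_eq_eRk, eRank'_eq_eRk, eRk_insert_eq_add_one ⟨he, hcl⟩] at h
    exact ((ENat.add_one_le_iff (M.isRkFinite_set A).eRk_lt_top.ne).mp h.le).false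
  · rw [Blocks, eRank'_eq_eRk, eRank'_eq_eRk, eRk_insert_of_mem_closure h]

lemma mem_closure_of_eRank_le_eRk [M.RankFinite] (hC : M.eRank ≤ M.eRk C) (he : e ∈ M.E) :
    e ∈ M.closure C := by
  have hspan : M.Spanning (C ∩ M.E) :=
    (spanning_iff_eRk_le inter_subset_right).mpr (by rwa [eRk_inter_ground])
  rwa [← closure_inter_ground, hspan.closure_eq]

lemma eRank_le_eRk_insert_add (he : e ∈ M.E \ M.closure C) (hC : M.eRank ≤ M.eRk C + (k + 1)) :
    M.eRank ≤ M.eRk (insert e C) + k := by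
  rw [M.eRk_insert_eq_add_one he, add_assoc, add_comm 1]
  exact_mod_cast hC

/-- With `C = ∅` and `T = univ` these are the `F`-good elements; in general `C` stands for the
sampled elements, heavier than all of `T`, that have already been scanned. -/
def goodSet (M : Matroid α) (μ : α → ℝ) (F C T : Set α) : Set α :=
  {e ∈ T | e ∉ M.closure (C ∪ {x ∈ T ∩ F | μ e < μ x})}

lemma goodSet_congr (h : T ∩ F = T ∩ F') : M.goodSet μ F C T = M.goodSet μ F' C T := by
  simp only [goodSet, h]

lemma goodSet_insert (ha : a ∉ T) (hlt : ∀ x ∈ T, μ x < μ a) :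
    M.goodSet μ F C (insert a T) = ({a} \ M.closure C) ∪ M.goodSet μ F (C ∪ ({a} ∩ F)) T := by
  have hsample : ∀ e ∈ T, C ∪ {x ∈ insert a T ∩ F | μ e < μ x} =
      C ∪ ({a} ∩ F) ∪ {x ∈ T ∩ F | μ e < μ x} := by
    intro e he
    have := hlt e he
    ext x
    simp only [mem_union, mem_insert_iff, mem_inter_iff, mem_singleton_iff]
    grind
  have hnone : {x ∈ insert a T ∩ F | μ a < μ x} = ∅ := by
    ext x
    simp only [mem_inter_iff, mem_insert_iff, mem_empty_iff_false, iff_false]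
    rintro ⟨⟨rfl | hx, -⟩, hax⟩
    exacts [lt_irrefl _ hax, (hlt x hx).not_gt hax]
  ext e
  simp only [goodSet, mem_union, mem_sdiff, mem_singleton_iff, mem_sep_iff]
  constructor
  · rintro ⟨hea | he, hcl⟩
    · subst hea
      exact .inl ⟨rfl, by rwa [hnone, union_empty] at hcl⟩
    · exact .inr ⟨he, hsample e he ▸ hcl⟩
  · rintro (⟨hea, hcl⟩ | ⟨he, hcl⟩)
    · subst hea
      exact ⟨.inl rfl, by rwa [hnone, union_empty]⟩
    · exact ⟨.inr he, (hsample e he).symm ▸ hcl⟩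

lemma encard_goodSet_insert (ha : a ∉ T) (hlt : ∀ x ∈ T, μ x < μ a) :
    (M.goodSet μ F C (insert a T)).encard =
      ({a} \ M.closure C).encard + (M.goodSet μ F (C ∪ ({a} ∩ F)) T).encard := by
  refine goodSet_insert ha hlt ▸ encard_union_eq (disjoint_left.mpr fun e he he' => ?_)
  exact ha (he.1 ▸ he'.1)

lemma dependsOn_lt_encard_goodSet (M : Matroid α) (μ : α → ℝ) (C T : Set α) (n : ℕ∞) :
    DependsOn (fun σ : α → Bool => n < (M.goodSet μ {x | σ x = true} C T).encard) T :=
  fun σ τ h => by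
    dsimp only
    rw [goodSet_congr (F' := {x | τ x = true}) (by ext x; simp +contextual [h x])]

theorem measure_lt_encard_goodSet_le [M.RankFinite] {Ω : Type*}
    [MeasurableSpace Ω] {P : Measure Ω} [IsProbabilityMeasure P] {X : α → Ω → Bool}
    (hindep : iIndepFun X P) (hmeas : ∀ e, Measurable (X e)) {p : ℝ} (hp0 : 0 ≤ p)
    (hp1 : p ≤ 1) (hpe : ∀ e, P {ω | X e ω = true} = ENNReal.ofReal p) (T : Finset α)
    (hT : ↑T ⊆ M.E) (hμ : InjOn μ T) (C : Set α) (k r : ℕ) (hk : M.eRank ≤ M.eRk C + k) :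
    P {ω | (r : ℕ∞) < (M.goodSet μ {x | X x ω = true} C T).encard} ≤
      ENNReal.ofReal (negBinomialTail p k r) := by
  classical
  induction T using Finset.induction_on_max_value μ generalizing C k r with
  | empty => simp [goodSet]
  | insert a s ha hmax ih =>
    rw [Finset.coe_insert] at hT hμ
    have hlt (x) (hx : x ∈ s) : μ x < μ a :=
      (hmax x hx).lt_of_ne fun h => ha (hμ (.inr hx) (.inl rfl) h ▸ hx)
    specialize ih (insert_subset_iff.mp hT).2 (hμ.mono (subset_insert _ _))
    have hnonneg := negBinomialTail_nonneg hp0 hp1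
    by_cases hcl : a ∈ M.closure C
    · have hk' : M.eRank ≤ M.eRk (insert a C) + k :=
        hk.trans (add_le_add (M.eRk_mono (subset_insert _ _)) le_rfl)
      refine (measure_le_of_subset_bernoulli_split hindep hmeas hp0 hp1 hpe ha
        (M.dependsOn_lt_encard_goodSet μ (insert a C) s r) (M.dependsOn_lt_encard_goodSet μ C s r)
        (hnonneg _ _) (hnonneg _ _) (ih _ _ _ hk') (ih _ _ _ hk) fun ω hω => ?_).trans_eq ?_
      · simp only [mem_ofPred_eq, Finset.coe_insert, encard_goodSet_insert ha hlt,
          sdiff_eq_empty.mpr (singleton_subset_iff.mpr hcl), encard_empty, zero_add] at hω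
        cases h : X a ω <;> simp_all
      · rw [← add_mul, add_sub_cancel, one_mul]
    obtain _ | k := k
    · exact absurd (mem_closure_of_eRank_le_eRk (by simpa using hk) (hT (mem_insert a _))) hcl
    obtain _ | r := r
    · simpa [negBinomialTail_succ_zero] using prob_le_one
    rw [negBinomialTail_succ_succ]
    refine measure_le_of_subset_bernoulli_split hindep hmeas hp0 hp1 hpe ha
      (M.dependsOn_lt_encard_goodSet μ (insert a C) s r) (M.dependsOn_lt_encard_goodSet μ C s r)
      (hnonneg _ _) (hnonneg _ _) (ih _ _ _ (eRank_le_eRk_insert_add ⟨hT (mem_insert a _), hcl⟩ hk))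
      (ih _ _ _ hk) fun ω hω => ?_
    simp only [mem_ofPred_eq, Finset.coe_insert, encard_goodSet_insert ha hlt,
      sdiff_eq_left.mpr (disjoint_singleton_left.mpr hcl), encard_singleton, Nat.cast_succ,
      add_comm (r : ℕ∞), ENat.add_lt_add_iff_left ENat.one_ne_top] at hω
    cases h : X a ω <;> simp_all

end Matroid

theorem good_elements_dominated_general {α : Type*} [Fintype α]
    {Ω : Type*} [MeasurableSpace Ω] (P : Measure Ω) [IsProbabilityMeasure P]
    (M : Matroid α) (hE : M.E = Set.univ)
    (k : ℕ) (hrank : ∀ B, M.IsBase B → B.encard = (k : ℕ∞))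
    (μw : α → ℝ) (hinj : Function.Injective μw)
    (p : ℝ) (hp0 : 0 ≤ p) (hp1 : p ≤ 1)
    (X : α → Ω → Bool) (hmeas : ∀ e, Measurable (X e))
    (hindep : iIndepFun X P)
    (hpe : ∀ e, P {ω | X e ω = true} = ENNReal.ofReal p)
    (good : α → Ω → Prop)
    (hgood : ∀ e ω, good e ω ↔ ¬ M.Blocks {x | X x ω = true ∧ μw e < μw x} e)
    (r : ℕ) :
    P {ω | (r : ℕ∞) < {e | good e ω}.encard} ≤
      ENNReal.ofReal
        (∑ j ∈ Finset.range k, (r.choose j : ℝ) * p ^ j * (1 - p) ^ (r - j)) := by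
  have hgoodSet (ω : Ω) :
      {e | good e ω} = M.goodSet μw {x | X x ω = true} ∅ (Finset.univ : Finset α) := by
    ext e
    simp [goodSet, hgood, blocks_iff_mem_closure (hE ▸ mem_univ e)]
  have hk : M.eRank ≤ M.eRk ∅ + k := by
    obtain ⟨B, hB⟩ := M.exists_isBase
    rw [eRk_empty, zero_add, ← hB.encard_eq_eRank, hrank B hB]
  simp_rw [hgoodSet]
  exact measure_lt_encard_goodSet_le hindep hmeas hp0 hp1 hpe Finset.univ (by simp [hE])
    hinj.injOn ∅ k r hk

/-- Sampling-and-pruning lemma (Karger–Klein–Tarjan): if `F` is a random subset of the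
ground set obtained by including each element independently with probability `p`, then
the number of `F`-good elements (elements `e` such that `F^{> μ e}` does not block `e`)
is stochastically dominated by `NegBin(rank M; p)`, i.e. for every `r`,
`Pr[#good > r] ≤ Pr[NegBin(k;p) > r] = Pr[Bin(r;p) < k] = ∑_{j<k} C(r,j) pʲ (1−p)^{r−j}`. -/
theorem good_elements_dominated {α : Type*} [Fintype α]
    {Ω : Type*} [MeasurableSpace Ω] (P : Measure Ω) [IsProbabilityMeasure P]
    (M : Matroid α) (hE : M.E = Set.univ)
    (k : ℕ) (hrank : ∀ B, M.IsBase B → B.encard = (k : ℕ∞))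
    (μw : α → ℝ) (hinj : Function.Injective μw) (hpos : ∀ e, 0 < μw e)
    (p : ℝ) (hp0 : 0 ≤ p) (hp1 : p ≤ 1)
    (X : α → Ω → Bool) (hmeas : ∀ e, Measurable (X e))
    (hindep : iIndepFun X P)
    (hpe : ∀ e, P {ω | X e ω = true} = ENNReal.ofReal p)
    (good : α → Ω → Prop)
    (hgood : ∀ e ω, good e ω ↔ ¬ M.Blocks {x | X x ω = true ∧ μw e < μw x} e)
    (r : ℕ) :
    P {ω | (r : ℕ∞) < {e | good e ω}.encard} ≤
      ENNReal.ofReal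
        (∑ j ∈ Finset.range k, (r.choose j : ℝ) * p ^ j * (1 - p) ^ (r - j)) :=
  good_elements_dominated_general P M hE k hrank μw hinj p hp0 hp1 X hmeas hindep hpe good hgood r
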